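/- Well-posedness of the mixed Dirichlet–Neumann boundary value problem: Let (V,E,c) be a finite connected network with a partition V = I ⊔ L ⊔ R ⊔ N where L ∪ R is nonempty, no two vertices of B = L ∪ R ∪ N are adjacent, and every vertex of B is adjacent to some vertex of I. Then for every k > 0 there exists a unique g : V → ℝ satisfying g = k on R, g = 0 on L, Δg(x) = 0 for all x ∈ I, and (∂g/∂n)(I)(x) = 0 for all x ∈ N. -/

import Mathlib

open Finset

variable {V : Type*}

/-- The combinatorial Laplacian of `u` at `x` in a network with conductance `c`. -/
noncomputable def netLap [Fintype V] (G : SimpleGraph V) [DecidableRel G.Adj]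
    (c : V → V → ℝ) (u : V → ℝ) (x : V) : ℝ :=
  ∑ y ∈ G.neighborFinset x, c x y * (u x - u y)

/-- The normal derivative of `u` at `x` with respect to the set `F`. -/
noncomputable def netNormalDeriv [Fintype V] [DecidableEq V] (G : SimpleGraph V)
    [DecidableRel G.Adj] (c : V → V → ℝ) (F : Finset V) (u : V → ℝ) (x : V) : ℝ :=
  ∑ y ∈ (G.neighborFinset x).filter (· ∈ F), c x y * (u x - u y)

/-- The vertex boundary `δF` of `F`: vertices outside `F` adjacent to some vertex of `F`. -/
def netVertexBoundary [Fintype V] [DecidableEq V] (G : SimpleGraph V) [DecidableRel G.Adj]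
    (F : Finset V) : Finset V :=
  univ.filter fun x => x ∉ F ∧ ∃ y ∈ F, G.Adj x y

/-!
The problem is a square linear system: a vertex of `N` has all its neighbours in `I`, so its
normal derivative is its Laplacian, and the conditions say that the operator `u ↦ u` on `L ∪ R`,
`u ↦ Δu` elsewhere, sends `g` to `k · 1_R`. This operator is injective: if it kills `u` then
`u · Δu = 0` everywhere, so by Green's identity the energy `∑ c(x,y) (u x - u y)²` vanishes,
`u` is constant on the connected graph and hence zero, as it vanishes on `L ∪ R ≠ ∅`.
In finite dimension it is therefore bijective.
-/

theorem SimpleGraph.Preconnected.apply_eq_of_forall_adj {β : Type*} {G : SimpleGraph V}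
    (hconn : G.Preconnected) {f : V → β} (hf : ∀ x y, G.Adj x y → f x = f y) (x y : V) :
    f x = f y := by
  obtain ⟨w⟩ := hconn x y
  induction w with
  | nil => rfl
  | cons hadj _ ih => exact (hf _ _ hadj).trans ih

section Network

variable [Fintype V] {G : SimpleGraph V} [DecidableRel G.Adj] {c : V → V → ℝ}

theorem netLap_add (u v : V → ℝ) (x : V) :
    netLap G c (u + v) x = netLap G c u x + netLap G c v x := by
  simp only [netLap, Pi.add_apply, ← sum_add_distrib]
  exact sum_congr rfl fun y _ => by ring

theorem netLap_smul (a : ℝ) (u : V → ℝ) (x : V) :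
    netLap G c (a • u) x = a * netLap G c u x := by
  simp only [netLap, Pi.smul_apply, smul_eq_mul, mul_sum]
  exact sum_congr rfl fun y _ => by ring

theorem two_mul_sum_mul_netLap (hsymm : ∀ x y, c x y = c y x) (u : V → ℝ) :
    2 * ∑ x, u x * netLap G c u x
      = ∑ x, ∑ y ∈ G.neighborFinset x, c x y * (u x - u y) ^ 2 := by
  have hleft : ∑ x, u x * netLap G c u x
      = ∑ x, ∑ y ∈ G.neighborFinset x, c x y * u x * (u x - u y) := by
    simp only [netLap, mul_sum]
    exact sum_congr rfl fun x _ => sum_congr rfl fun y _ => by ring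
  have hswap : ∑ x, ∑ y ∈ G.neighborFinset x, c x y * u x * (u x - u y)
      = ∑ x, ∑ y ∈ G.neighborFinset x, c x y * -u y * (u x - u y) := by
    rw [sum_comm' (t' := univ) (s' := fun y => G.neighborFinset y)
      (by simp [SimpleGraph.adj_comm])]
    refine sum_congr rfl fun x _ => sum_congr rfl fun y _ => ?_
    rw [hsymm]; ring
  rw [two_mul, hleft]
  nth_rw 2 [hswap]
  simp only [← sum_add_distrib]
  exact sum_congr rfl fun x _ => sum_congr rfl fun y _ => by ring

theorem eq_of_adj_of_sum_mul_netLap_eq_zero (hsymm : ∀ x y, c x y = c y x)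
    (hpos : ∀ x y, G.Adj x y → 0 < c x y) {u : V → ℝ}
    (hu : ∑ x, u x * netLap G c u x = 0) {x y : V} (hxy : G.Adj x y) : u x = u y := by
  have hterm_nonneg : ∀ x, ∀ y ∈ G.neighborFinset x, 0 ≤ c x y * (u x - u y) ^ 2 :=
    fun x y hy => mul_nonneg (hpos x y ((G.mem_neighborFinset x y).mp hy)).le (sq_nonneg _)
  have henergy := two_mul_sum_mul_netLap (G := G) hsymm u
  rw [hu, mul_zero, eq_comm,
    sum_eq_zero_iff_of_nonneg fun x _ => sum_nonneg (hterm_nonneg x)] at henergy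
  have hterm := (sum_eq_zero_iff_of_nonneg (hterm_nonneg x)).mp (henergy x (mem_univ x)) y
    ((G.mem_neighborFinset x y).mpr hxy)
  rcases mul_eq_zero.mp hterm with hc | hsq
  · exact absurd hc (hpos x y hxy).ne'
  · exact sub_eq_zero.mp (pow_eq_zero_iff two_ne_zero |>.mp hsq)

variable [DecidableEq V]

noncomputable def dirichletLap (G : SimpleGraph V) [DecidableRel G.Adj] (c : V → V → ℝ)
    (S : Finset V) : (V → ℝ) →ₗ[ℝ] (V → ℝ) where
  toFun u x := if x ∈ S then u x else netLap G c u x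
  map_add' u v := funext fun x => by by_cases hx : x ∈ S <;> simp [hx, netLap_add]
  map_smul' a u := funext fun x => by by_cases hx : x ∈ S <;> simp [hx, netLap_smul]

theorem dirichletLap_apply (S : Finset V) (u : V → ℝ) (x : V) :
    dirichletLap G c S u x = if x ∈ S then u x else netLap G c u x := rfl

theorem dirichletLap_injective (hsymm : ∀ x y, c x y = c y x)
    (hpos : ∀ x y, G.Adj x y → 0 < c x y) (hconn : G.Preconnected) {S : Finset V}
    (hS : S.Nonempty) : Function.Injective (dirichletLap G c S) := by
  rw [← LinearMap.ker_eq_bot, LinearMap.ker_eq_bot']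
  intro u hu
  have hvalue : ∀ x, (if x ∈ S then u x else netLap G c u x) = 0 := congrFun hu
  have hprod : ∀ x, u x * netLap G c u x = 0 := fun x => by
    have := hvalue x
    split_ifs at this <;> simp [this]
  have hconst := hconn.apply_eq_of_forall_adj
    fun x y => eq_of_adj_of_sum_mul_netLap_eq_zero hsymm hpos (sum_eq_zero fun x _ => hprod x)
  obtain ⟨s, hs⟩ := hS
  funext x
  simpa [hs, hconst x s] using hvalue s

theorem dirichletLap_bijective (hsymm : ∀ x y, c x y = c y x)
    (hpos : ∀ x y, G.Adj x y → 0 < c x y) (hconn : G.Preconnected) {S : Finset V}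
    (hS : S.Nonempty) : Function.Bijective (dirichletLap G c S) :=
  have hinj := dirichletLap_injective hsymm hpos hconn hS
  ⟨hinj, LinearMap.injective_iff_surjective.mp hinj⟩

theorem netNormalDeriv_eq_netLap {F : Finset V} {x : V} (hF : ∀ y, G.Adj x y → y ∈ F)
    (u : V → ℝ) : netNormalDeriv G c F u x = netLap G c u x := by
  rw [netNormalDeriv, filter_true_of_mem fun y hy => hF y ((G.mem_neighborFinset x y).mp hy),
    netLap]

theorem dirichletLap_eq_iff {I L R N : Finset V}
    (hIL : Disjoint I L) (hIR : Disjoint I R) (hLR : Disjoint L R) (hLN : Disjoint L N)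
    (hRN : Disjoint R N) (hcover : I ∪ L ∪ R ∪ N = univ)
    (hN : ∀ x ∈ N, ∀ y, G.Adj x y → y ∈ I) (k : ℝ) (g : V → ℝ) :
    dirichletLap G c (L ∪ R) g = (fun x => if x ∈ R then k else 0) ↔
      (∀ x ∈ R, g x = k) ∧ (∀ x ∈ L, g x = 0)
        ∧ (∀ x ∈ I, netLap G c g x = 0)
        ∧ (∀ x ∈ N, netNormalDeriv G c I g x = 0) := by
  have hmem : ∀ x, x ∈ I ∨ x ∈ L ∨ x ∈ R ∨ x ∈ N := fun x => by
    simpa [or_assoc] using eq_univ_iff_forall.mp hcover x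
  simp only [funext_iff, dirichletLap_apply]
  constructor
  · intro h
    refine ⟨fun x hx => ?_, fun x hx => ?_, fun x hx => ?_, fun x hx => ?_⟩
    · simpa [hx] using h x
    · simpa [hx, disjoint_left.mp hLR hx] using h x
    · simpa [disjoint_left.mp hIL hx, disjoint_left.mp hIR hx] using h x
    · rw [netNormalDeriv_eq_netLap (hN x hx)]
      simpa [disjoint_right.mp hLN hx, disjoint_right.mp hRN hx] using h x
  · rintro ⟨hR, hL, hI, hN'⟩ x
    rcases hmem x with hx | hx | hx | hx
    · simpa [disjoint_left.mp hIL hx, disjoint_left.mp hIR hx] using hI x hx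
    · simpa [hx, disjoint_left.mp hLR hx] using hL x hx
    · simpa [hx] using hR x hx
    · rw [← netNormalDeriv_eq_netLap (hN x hx)]
      simpa [disjoint_right.mp hLN hx, disjoint_right.mp hRN hx] using hN' x hx

end Network

theorem dn_bvp_well_posedness_general [Fintype V] [DecidableEq V]
    (G : SimpleGraph V) [DecidableRel G.Adj] (c : V → V → ℝ)
    (hsymm : ∀ x y, c x y = c y x)
    (hpos : ∀ x y, G.Adj x y → 0 < c x y)
    (hconn : G.Connected)
    (I L R N : Finset V)
    (hLRne : (L ∪ R).Nonempty)
    (hIL : Disjoint I L) (hIR : Disjoint I R)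
    (hLR : Disjoint L R) (hLN : Disjoint L N) (hRN : Disjoint R N)
    (hcover : I ∪ L ∪ R ∪ N = univ)
    (hbdry_nonadj : ∀ x ∈ L ∪ R ∪ N, ∀ y ∈ L ∪ R ∪ N, ¬ G.Adj x y) :
    ∀ k : ℝ, 0 < k →
      ∃! g : V → ℝ, (∀ x ∈ R, g x = k) ∧ (∀ x ∈ L, g x = 0)
        ∧ (∀ x ∈ I, netLap G c g x = 0)
        ∧ (∀ x ∈ N, netNormalDeriv G c I g x = 0) := by
  intro k _
  have hN : ∀ x ∈ N, ∀ y, G.Adj x y → y ∈ I := fun x hx y hxy => by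
    by_contra hyI
    have hy : y ∈ L ∪ R ∪ N := by simpa [hyI, or_assoc] using eq_univ_iff_forall.mp hcover y
    exact hbdry_nonadj x (mem_union_right _ hx) y hy hxy
  refine (existsUnique_congr
    (dirichletLap_eq_iff hIL hIR hLR hLN hRN hcover hN k)).mp ?_
  exact (dirichletLap_bijective hsymm hpos hconn.preconnected hLRne).existsUnique _

/-- Well-posedness of the mixed Dirichlet–Neumann boundary value problem: for every
`k > 0` there is a unique solution `g`. -/
theorem dn_bvp_well_posedness [Fintype V] [DecidableEq V]
    (G : SimpleGraph V) [DecidableRel G.Adj] (c : V → V → ℝ)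
    (hsymm : ∀ x y, c x y = c y x)
    (hpos : ∀ x y, G.Adj x y → 0 < c x y)
    (hzero : ∀ x y, ¬ G.Adj x y → c x y = 0)
    (hconn : G.Connected)
    (I L R N : Finset V)
    (hLRne : (L ∪ R).Nonempty)
    (hIL : Disjoint I L) (hIR : Disjoint I R) (hIN : Disjoint I N)
    (hLR : Disjoint L R) (hLN : Disjoint L N) (hRN : Disjoint R N)
    (hcover : I ∪ L ∪ R ∪ N = univ)
    (hbdry_nonadj : ∀ x ∈ L ∪ R ∪ N, ∀ y ∈ L ∪ R ∪ N, ¬ G.Adj x y)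
    (hbdry_adj : ∀ x ∈ L ∪ R ∪ N, ∃ y ∈ I, G.Adj x y) :
    ∀ k : ℝ, 0 < k →
      ∃! g : V → ℝ, (∀ x ∈ R, g x = k) ∧ (∀ x ∈ L, g x = 0)
        ∧ (∀ x ∈ I, netLap G c g x = 0)
        ∧ (∀ x ∈ N, netNormalDeriv G c I g x = 0) :=
  dn_bvp_well_posedness_general G c hsymm hpos hconn I L R N hLRne hIL hIR hLR hLN hRN hcover
    hbdry_nonadj
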